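/- arXiv:2411.17699 — 4 statements merged into one kernel-verified Lean document; each statement's English description precedes it below -/
import Mathlib

section
/- Let $n \geq 2$, let $r_1, \dots, r_n$ be positive integers with $r = \sum_i r_i$, and let $\kappa$ be a positive integer. Suppose integers $\epsilon_1,\dots,\epsilon_n$ and residues $\mu, \mu_1,\dots,\mu_n$ satisfy $\kappa \sum_i r_i \epsilon_i = \mu - \sum_i \mu_i$. Define $q_i = \mu_i + \tfrac{1}{2}\kappa r_i + \kappa r_i \epsilon_i$ (assume $\kappa r_i$ is even so that $q_i \in \mathbb{Z}$) and $\gamma_{ij} = r_j q_i - r_i q_j$. Then $\sum_{i<j} \gamma_{ij} \equiv (r-1)\mu - \sum_i (r_i - 1)\mu_i \pmod 2$. -/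
/-!
Modulo 2 the sign in `γᵢⱼ = rⱼ qᵢ - rᵢ qⱼ` is invisible, so `∑_{i<j} γᵢⱼ` is congruent to the
off-diagonal sum `∑_{i ≠ j} rⱼ qᵢ = r ∑ qᵢ - ∑ rᵢ qᵢ`. The constraint gives `∑ qᵢ = μ + ∑ hᵢ`
with `hᵢ = κ rᵢ / 2`, and `rᵢ qᵢ ≡ rᵢ μᵢ + rᵢ hᵢ`. What is left over is `μ - ∑ μᵢ = 2 ∑ hᵢ εᵢ`
and the off-diagonal sum `∑_{i ≠ j} rⱼ hᵢ`, which is even because `rⱼ hᵢ = rᵢ hⱼ`.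
-/

theorem Finset.sum_sum_eq_sum_sub_swap_add {ι M : Type*} [Fintype ι] [LinearOrder ι]
    [AddCommGroup M] (f : ι → ι → M) :
    ∑ i, ∑ j, f i j = (∑ i, ∑ j, if i < j then f i j - f j i else 0)
      + 2 • (∑ i, ∑ j, if i < j then f j i else 0) + ∑ i, f i i := by
  have hswap : (∑ i, ∑ j, if j < i then f i j else 0) = ∑ i, ∑ j, if i < j then f j i else 0 :=
    Finset.sum_comm
  have hpoint : ∀ i j, f i j = (if i < j then f i j - f j i else 0) + (if i < j then f j i else 0)
      + (if j < i then f i j else 0) + (if i = j then f i j else 0) := by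
    intro i j
    rcases lt_trichotomy i j with hij | rfl | hij
    · simp [hij, hij.not_gt, hij.ne]
    · simp
    · simp [hij, hij.not_gt, hij.ne']
  simp_rw [Finset.sum_congr rfl fun i _ => Finset.sum_congr rfl fun j _ => hpoint i j,
    Finset.sum_add_distrib, hswap, Finset.sum_ite_eq, Finset.mem_univ, if_true, two_nsmul]
  abel

theorem Int.sum_lt_mul_sub_swap_modEq_two {ι : Type*} [Fintype ι] [LinearOrder ι]
    (a b : ι → ℤ) :
    (∑ i, ∑ j, if i < j then b j * a i - b i * a j else 0)
      ≡ (∑ i, b i) * (∑ i, a i) - ∑ i, b i * a i [ZMOD 2] := by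
  have hsplit := Finset.sum_sum_eq_sum_sub_swap_add fun i j => b j * a i
  have hprod : ∑ i, ∑ j, b j * a i = (∑ i, b i) * ∑ i, a i := by
    rw [Finset.sum_comm, Fintype.sum_mul_sum]
  rw [hprod, nsmul_eq_mul, Nat.cast_ofNat] at hsplit
  exact Int.modEq_iff_dvd.mpr
    ⟨∑ i, ∑ j, if i < j then b i * a j else 0, by linear_combination hsplit⟩

theorem mul_eq_mul_of_forall_mul_eq_two_mul {ι : Type*} {κ : ℤ} {r h : ι → ℤ}
    (hh : ∀ i, κ * r i = 2 * h i) (i j : ι) : r i * h j = r j * h i := by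
  rcases eq_or_ne κ 0 with rfl | hκ
  · have hi := hh i
    have hj := hh j
    simp only [zero_mul] at hi hj
    simp [show h i = 0 by omega, show h j = 0 by omega]
  · exact mul_left_cancel₀ hκ (by linear_combination h j * hh i - h i * hh j)

theorem dirac_pairing_parity_general (n : ℕ) (κ : ℤ)
    (r : Fin n → ℤ)
    (h : Fin n → ℤ) (hh : ∀ i, κ * r i = 2 * h i)
    (ε μi : Fin n → ℤ) (μ : ℤ)
    (hcon : κ * ∑ i, r i * ε i = μ - ∑ i, μi i)
    (q : Fin n → ℤ) (hq : ∀ i, q i = μi i + h i + κ * r i * ε i) :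
    (∑ i : Fin n, ∑ j : Fin n, if i < j then r j * q i - r i * q j else 0) ≡
      ((∑ i, r i) - 1) * μ - ∑ i, (r i - 1) * μi i [ZMOD 2] := by
  have hsum_q : ∑ i, q i = μ + ∑ i, h i := by
    simp only [hq, Finset.sum_add_distrib, ← Finset.mul_sum, mul_assoc, hcon]
    ring
  have hsum_rq : ∑ i, r i * q i = ∑ i, r i * μi i + ∑ i, r i * h i + 2 * ∑ i, h i * r i * ε i := by
    simp only [Finset.mul_sum, ← Finset.sum_add_distrib]
    exact Finset.sum_congr rfl fun i _ => by linear_combination r i * hq i + r i * ε i * hh i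
  have hμ : μ - ∑ i, μi i = 2 * ∑ i, h i * ε i := by
    rw [← hcon, Finset.mul_sum, Finset.mul_sum]
    exact Finset.sum_congr rfl fun i _ => by linear_combination ε i * hh i
  have hoff_h : 2 ∣ (∑ i, r i) * (∑ i, h i) - ∑ i, r i * h i := by
    have := Int.sum_lt_mul_sub_swap_modEq_two h r
    simp only [mul_eq_mul_of_forall_mul_eq_two_mul hh, sub_self, ite_self,
      Finset.sum_const_zero] at this
    exact Int.modEq_zero_iff_dvd.mp this.symm
  have hsum_rμ : ∑ i, (r i - 1) * μi i = ∑ i, r i * μi i - ∑ i, μi i := by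
    simp only [sub_mul, one_mul, Finset.sum_sub_distrib]
  obtain ⟨k, hk⟩ := hoff_h
  refine (Int.sum_lt_mul_sub_swap_modEq_two q r).trans <| Int.modEq_iff_dvd.mpr
    ⟨-k - ∑ i, h i * ε i + ∑ i, h i * r i * ε i, ?_⟩
  rw [hsum_q, hsum_rq, hsum_rμ]
  linear_combination -hk - hμ

/-- Parity computation for the Dirac pairings `γᵢⱼ = rⱼ qᵢ - rᵢ qⱼ` with the spectral flow
decomposition `qᵢ = μᵢ + κ rᵢ / 2 + κ rᵢ εᵢ` (the half-integer part `κ rᵢ / 2` is encoded by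
`h i` with `κ * r i = 2 * h i`), subject to the constraint `κ ∑ rᵢ εᵢ = μ - ∑ μᵢ`:
`∑_{i<j} γᵢⱼ ≡ (r-1) μ - ∑ᵢ (rᵢ - 1) μᵢ (mod 2)` where `r = ∑ᵢ rᵢ`. -/
theorem dirac_pairing_parity (n : ℕ) (hn : 2 ≤ n) (κ : ℤ) (hκ : 0 < κ)
    (r : Fin n → ℤ) (hr : ∀ i, 0 < r i)
    (h : Fin n → ℤ) (hh : ∀ i, κ * r i = 2 * h i)
    (ε μi : Fin n → ℤ) (μ : ℤ)
    (hcon : κ * ∑ i, r i * ε i = μ - ∑ i, μi i)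
    (q : Fin n → ℤ) (hq : ∀ i, q i = μi i + h i + κ * r i * ε i) :
    (∑ i : Fin n, ∑ j : Fin n, if i < j then r j * q i - r i * q j else 0) ≡
      ((∑ i, r i) - 1) * μ - ∑ i, (r i - 1) * μi i [ZMOD 2] :=
  dirac_pairing_parity_general n κ r h hh ε μi μ hcon q hq
end

section
/- Let $r_1, \dots, r_n$ be positive integers, $r = \sum_i r_i$, and $\kappa$ a positive integer. The lattice $\Lambda = \{\mathbf{k} \in \mathbb{Z}^n : \sum_{i=1}^n r_i k_i = 0\}$ equipped with the bilinear form $\mathbf{x} \cdot \mathbf{y} = \kappa \sum_i r_i x_i y_i$ has discriminant (determinant of the Gram matrix of any $\mathbb{Z}$-basis) equal to $\frac{\kappa^{n-1} r}{r_0^2} \prod_{i=1}^n r_i$, where $r_0 = \gcd(r_1, \dots, r_n)$. -/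
/-!
Write `f = chargeSum r` and `g = gcd(r₁, …, rₙ)`, so that `f(ℤⁿ) = gℤ`. If `f x = g`, then
`ℤⁿ = Λ ⊕ ℤx`, so the basis of `Λ` together with `x` is unimodular. Replacing `x` by the
all-ones vector `𝟙` multiplies the determinant by `r / g`, because `f 𝟙 = r`; but `𝟙` is
orthogonal to `Λ` and has square length `κ r`, so the Gram matrix of the basis of `Λ` together
with `𝟙` is block diagonal. Comparing determinants gives `(r / g)² κⁿ ∏ rᵢ = κ r · disc Λ`.
-/

/-- The linear form `k ↦ ∑ᵢ rᵢ kᵢ` on `ℤⁿ`; its kernel is the lattice `Λ^(𝐫)`. -/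
def chargeSum {n : ℕ} (r : Fin n → ℤ) : (Fin n → ℤ) →ₗ[ℤ] ℤ where
  toFun k := ∑ i, r i * k i
  map_add' a b := by
    simp only [Pi.add_apply, mul_add]
    exact Finset.sum_add_distrib
  map_smul' c a := by
    simp only [Pi.smul_apply, smul_eq_mul, RingHom.id_apply]
    rw [Finset.mul_sum]
    exact Finset.sum_congr rfl fun i _ => by ring

open Matrix

theorem transpose_mul_diagonal_mul_apply {ι m : Type*} [Fintype ι] [DecidableEq ι]
    (M : Matrix ι m ℤ) (d : ι → ℤ) (j j' : m) :
    (Mᵀ * diagonal d * M) j j' = ∑ i, d i * M i j * M i j' := by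
  rw [mul_apply]
  simp only [mul_diagonal, transpose_apply]
  exact Finset.sum_congr rfl fun i _ => by ring

section KernelBasis

variable {ι m : Type*} {f : (ι → ℤ) →ₗ[ℤ] ℤ} (b : Module.Basis m ℤ (LinearMap.ker f))
  (e : m ⊕ Unit ≃ ι)

noncomputable def kerBasisMatrix (v : ι → ℤ) : Matrix ι ι ℤ :=
  Matrix.of fun i j => Sum.elim (fun a => (b a : ι → ℤ) i) (fun _ => v i) (e.symm j)

theorem kerBasisMatrix_eq_updateCol [DecidableEq ι] (v w : ι → ℤ) :
    kerBasisMatrix b e w = (kerBasisMatrix b e v).updateCol (e (.inr ())) w := by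
  ext i j
  rcases hj : e.symm j with a | _
  · have hne : j ≠ e (.inr ()) := by rintro rfl; simp at hj
    simp [kerBasisMatrix, hj, hne]
  · rw [e.symm_apply_eq.mp hj]
    simp [kerBasisMatrix]

variable [Fintype ι] [Fintype m]

theorem exists_kerBasisMatrix_mulVec_eq {x y : ι → ℤ} {t : ℤ} (h : f y = t * f x) :
    ∃ c, kerBasisMatrix b e x *ᵥ c = y ∧ c (e (.inr ())) = t := by
  have hker : y - t • x ∈ LinearMap.ker f := by
    rw [LinearMap.mem_ker, map_sub, map_smul, h, smul_eq_mul, sub_self]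
  set k : LinearMap.ker f := ⟨y - t • x, hker⟩
  refine ⟨fun j => Sum.elim (b.repr k) (fun _ => t) (e.symm j), ?_, by simp⟩
  have hk : ∑ a, b.repr k a • (b a : ι → ℤ) = y - t • x := by
    simpa only [Submodule.coe_sum, Submodule.coe_smul] using congrArg Subtype.val (b.sum_repr k)
  ext i
  have hki := congrFun hk i
  simp only [Finset.sum_apply, Pi.smul_apply, Pi.sub_apply, smul_eq_mul, mul_comm] at hki
  simp only [mulVec, dotProduct, ← e.sum_comp, kerBasisMatrix, of_apply, e.symm_apply_apply,
    Fintype.sum_sum_type, Sum.elim_inl, Sum.elim_inr, Finset.univ_unique, Finset.sum_singleton,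
    mul_comm]
  linarith

variable [DecidableEq ι]

theorem det_kerBasisMatrix_of_map_eq {x y : ι → ℤ} {t : ℤ} (h : f y = t * f x) :
    (kerBasisMatrix b e y).det = t * (kerBasisMatrix b e x).det := by
  obtain ⟨c, hc, hct⟩ := exists_kerBasisMatrix_mulVec_eq b e h
  have hy : y = fun i => ∑ j, c j • kerBasisMatrix b e x i j := by
    rw [← hc]; ext i; simp [mulVec, dotProduct, mul_comm]
  rw [kerBasisMatrix_eq_updateCol b e x, hy, det_updateCol_sum, hct, smul_eq_mul]

theorem isUnit_det_kerBasisMatrix {x : ι → ℤ} (hx : ∀ y, f x ∣ f y) :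
    IsUnit (kerBasisMatrix b e x).det := by
  rw [← isUnit_iff_isUnit_det, ← mulVec_surjective_iff_isUnit]
  intro y
  obtain ⟨t, ht⟩ := hx y
  obtain ⟨c, hc, -⟩ := exists_kerBasisMatrix_mulVec_eq b e (ht.trans (mul_comm _ _))
  exact ⟨c, hc⟩

end KernelBasis

section ChargeSum

variable {n : ℕ} (r : Fin n → ℤ)

theorem chargeSum_apply (k : Fin n → ℤ) : chargeSum r k = ∑ i, r i * k i := rfl

theorem gcd_dvd_chargeSum (k : Fin n → ℤ) : Finset.univ.gcd r ∣ chargeSum r k :=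
  chargeSum_apply r k ▸ Finset.dvd_sum fun i _ => (Finset.gcd_dvd (Finset.mem_univ i)).mul_right _

theorem exists_chargeSum_eq_gcd : ∃ x, chargeSum r x = Finset.univ.gcd r := by
  obtain ⟨x, hx⟩ := Finset.gcd_eq_sum_mul Finset.univ r
  exact ⟨x, hx.symm⟩

theorem chargeSum_one : chargeSum r 1 = ∑ i, r i := by simp [chargeSum_apply]

/-- Since `𝟙` is orthogonal to `Λ`, its column splits off the Gram matrix. -/
theorem gram_kerBasisMatrix_one {m : Type*} [Fintype m] [DecidableEq m] (κ : ℤ)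
    (b : Module.Basis m ℤ (LinearMap.ker (chargeSum r))) (e : m ⊕ Unit ≃ Fin n) :
    (kerBasisMatrix b e 1)ᵀ * diagonal (fun i => κ * r i) * kerBasisMatrix b e 1 =
      (fromBlocks
        (Matrix.of fun a a' => κ * ∑ i, r i * (b a : Fin n → ℤ) i * (b a' : Fin n → ℤ) i)
        0 0 (Matrix.of fun _ _ => κ * ∑ i, r i)).submatrix e.symm e.symm := by
  have horth (a : m) : ∑ i, κ * r i * (b a : Fin n → ℤ) i = 0 := by
    have hker : chargeSum r (b a) = 0 := (b a).2
    rw [chargeSum_apply] at hker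
    simp_rw [mul_assoc, ← Finset.mul_sum, hker, mul_zero]
  ext j j'
  rw [transpose_mul_diagonal_mul_apply, submatrix_apply]
  simp only [kerBasisMatrix, of_apply]
  rcases e.symm j with a | _ <;> rcases e.symm j' with a' | _ <;>
    simp only [Sum.elim_inl, Sum.elim_inr, Pi.one_apply, mul_one, fromBlocks_apply₁₁,
      fromBlocks_apply₁₂, fromBlocks_apply₂₁, fromBlocks_apply₂₂, Matrix.zero_apply]
  · simp only [of_apply, Finset.mul_sum, mul_assoc]
  · exact horth a
  · exact horth a'
  · simp only [of_apply, Finset.mul_sum]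

theorem det_kerBasisMatrix_one_sq_mul {m : Type*} [Fintype m] [DecidableEq m] (κ : ℤ)
    (b : Module.Basis m ℤ (LinearMap.ker (chargeSum r))) (e : m ⊕ Unit ≃ Fin n) :
    (kerBasisMatrix b e 1).det ^ 2 * (κ ^ n * ∏ i, r i) =
      (Matrix.of fun a a' => κ * ∑ i, r i * (b a : Fin n → ℤ) i * (b a' : Fin n → ℤ) i).det *
        (κ * ∑ i, r i) := by
  have h := congrArg det (gram_kerBasisMatrix_one r κ b e)
  rw [det_mul, det_mul, det_transpose, det_diagonal, Finset.prod_mul_distrib, Finset.prod_const,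
    Finset.card_univ, Fintype.card_fin, det_submatrix_equiv_self, det_fromBlocks_zero₂₁,
    det_unique (n := Unit), of_apply] at h
  linear_combination h

end ChargeSum

/-- The lattice `Λ = {k ∈ ℤⁿ : ∑ rᵢ kᵢ = 0}` with bilinear form `𝐱 ⬝ 𝐲 = κ ∑ rᵢ xᵢ yᵢ`
has discriminant (determinant of the Gram matrix of any ℤ-basis) equal to
`κ^(n-1) r (∏ rᵢ) / r₀²` where `r = ∑ rᵢ` and `r₀ = gcd(r₁, …, rₙ)`. -/
theorem lattice_discriminant (n : ℕ) (hn : 1 ≤ n) (κ : ℤ) (hκ : 0 < κ)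
    (r : Fin n → ℤ) (hr : ∀ i, 0 < r i)
    (b : Module.Basis (Fin (n - 1)) ℤ (LinearMap.ker (chargeSum r))) :
    (Finset.univ.gcd r) ^ 2 *
        Matrix.det (Matrix.of fun a a' : Fin (n - 1) =>
          κ * ∑ i, r i * ((b a : Fin n → ℤ) i) * ((b a' : Fin n → ℤ) i))
      = κ ^ (n - 1) * (∑ i, r i) * ∏ i, r i := by
  have hcard : Fintype.card (Fin (n - 1) ⊕ Unit) = Fintype.card (Fin n) := by simp; omega
  let e := Fintype.equivOfCardEq hcard
  obtain ⟨x, hx⟩ := exists_chargeSum_eq_gcd r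
  obtain ⟨s, hs⟩ := chargeSum_one r ▸ gcd_dvd_chargeSum r 1
  have hAx := Int.isUnit_sq (isUnit_det_kerBasisMatrix b e (hx ▸ gcd_dvd_chargeSum r))
  have hA1 := det_kerBasisMatrix_of_map_eq b e (x := x) (y := 1) (t := s)
    (by rw [hx, chargeSum_one, hs, mul_comm])
  have hgram := det_kerBasisMatrix_one_sq_mul r κ b e
  have hκn : κ ^ n = κ ^ (n - 1) * κ := (pow_sub_one_mul (by omega) κ).symm
  have hR : 0 < ∑ i, r i := Finset.sum_pos (fun i _ => hr i) ⟨⟨0, hn⟩, Finset.mem_univ _⟩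
  refine mul_left_cancel₀ (by positivity : κ * ∑ i, r i ≠ 0) ?_
  rw [hA1, hκn] at hgram
  linear_combination (-(Finset.univ.gcd r) ^ 2) * hgram
    + (Finset.univ.gcd r * s) ^ 2 * κ ^ (n - 1) * κ * (∏ i, r i) * hAx
    - κ ^ (n - 1) * κ * (∏ i, r i) * (∑ i, r i + Finset.univ.gcd r * s) * hs
end

section
/- Let $n \geq 1$ and let $r_1, \dots, r_n$ be positive integers with $r = \sum_i r_i$ and $r_0 = \gcd(r_1, \dots, r_n)$. Define for an ordered composition $n = \sum_{k=1}^m n_k$ the groupings $s_k = \sum_{i=j_k+1}^{j_{k+1}} r_i$ where $j_k = \sum_{l<k} n_l$, and for a tuple $\mathbf{t} = (t_1, \dots, t_p)$ of positive integers set $c_{\mathbf{t}} = \frac{\gcd(\mathbf{t})}{(\pi i \kappa)^{p-1} (\sum_i t_i)} \prod_{k=1}^{p-1}\big(\sum_{i=1}^k t_i \sum_{j=p-k+1}^{p} t_j\big)^{-1}$ (with the empty product equal to $1$, so $c_{(t)} = \tfrac{\gcd(t)}{t} = 1$ for a single entry). Then, for $n = 2$ and $n = 3$ and any positive integer $\kappa$: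 $\sum_{m=1}^n \sum_{n_1 + \cdots + n_m = n} \big(-\tfrac{1}{\pi i \kappa}\big)^{m-1} \frac{\prod_{k=1}^m c_{\mathfrak{r}_k}}{\prod_{k=1}^m \gcd(\mathfrak{r}_k) \prod_{k=1}^{m-1}(s_k + s_{k+1})} = 0$, where $\mathfrak{r}_k = (r_{j_k+1}, \dots, r_{j_{k+1}})$. -/
/-! Once the gcd factors cancel, everything is a rational function of `r₁, r₂, r₃` and `πiκ`.
For `n = 2` the two terms are `±1 / (πiκ r₁ r₂ (r₁ + r₂))`. For `n = 3`, over the common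
denominator `(πiκ)² r₁ r₂ r₃ (r₁ + r₂) (r₂ + r₃) (r₁ + r₂ + r₃)` the four terms have numerators
`r₂`, `-(r₂ + r₃)`, `-(r₁ + r₂)` and `r₁ + r₂ + r₃`, which sum to zero. -/

open Complex

/-- gcd of a list of naturals. -/
def listGcd (t : List ℕ) : ℕ := t.foldr Nat.gcd 0

/-- The coefficient `c_𝐭 = gcd(𝐭) / ((πiκ)^{p-1} (∑ tᵢ) ∏_{k=1}^{p-1} (∑_{i≤k} tᵢ · ∑_{j≥p-k+1} tⱼ))`
for a tuple `𝐭 = (t₁,…,t_p)` of positive integers (empty product `= 1`). -/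
noncomputable def ccoef (κ : ℕ) (t : List ℕ) : ℂ :=
  (listGcd t : ℂ) /
    (((Real.pi : ℂ) * I * κ) ^ (t.length - 1) * (t.sum : ℂ) *
      ∏ k ∈ Finset.range (t.length - 1),
        (((t.take (k + 1)).sum : ℂ) * ((t.drop (t.length - (k + 1))).sum : ℂ)))

lemma ccoef_singleton (κ : ℕ) {a : ℕ} (ha : a ≠ 0) : ccoef κ [a] = 1 := by
  simp [ccoef, listGcd, ha]

lemma ccoef_pair (κ a b : ℕ) :
    ccoef κ [a, b] = Nat.gcd a b / (Real.pi * I * κ * (a + b) * (a * b)) := by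
  simp [ccoef, listGcd]

lemma ccoef_triple (κ a b c : ℕ) :
    ccoef κ [a, b, c] = listGcd [a, b, c] /
      ((Real.pi * I * κ) ^ 2 * (a + (b + c)) * (a * c * ((a + b) * (b + c)))) := by
  simp [ccoef, listGcd, Finset.prod_range_succ]

/-- The leading coefficients `c_𝐫` solve the system
`∑_{m=1}^n ∑_{n₁+⋯+n_m=n} (-1/(πiκ))^{m-1} ∏ c_{𝔯_k} / (∏ gcd(𝔯_k) ∏ (s_k + s_{k+1})) = 0`
for `n = 2` and `n = 3` (the sums over ordered compositions written out explicitly). -/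
theorem ccoef_system (κ r₁ r₂ r₃ : ℕ) (hκ : 0 < κ)
    (h₁ : 0 < r₁) (h₂ : 0 < r₂) (h₃ : 0 < r₃) :
    (ccoef κ [r₁, r₂] / (Nat.gcd r₁ r₂ : ℂ)
        + (-(1 / ((Real.pi : ℂ) * I * κ))) *
            (ccoef κ [r₁] * ccoef κ [r₂] / ((r₁ : ℂ) * (r₂ : ℂ) * ((r₁ : ℂ) + (r₂ : ℂ)))) = 0) ∧
    (ccoef κ [r₁, r₂, r₃] / (listGcd [r₁, r₂, r₃] : ℂ)
        + (-(1 / ((Real.pi : ℂ) * I * κ))) *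
            (ccoef κ [r₁, r₂] * ccoef κ [r₃] /
              ((Nat.gcd r₁ r₂ : ℂ) * (r₃ : ℂ) * (((r₁ : ℂ) + (r₂ : ℂ)) + (r₃ : ℂ))))
        + (-(1 / ((Real.pi : ℂ) * I * κ))) *
            (ccoef κ [r₁] * ccoef κ [r₂, r₃] /
              ((r₁ : ℂ) * (Nat.gcd r₂ r₃ : ℂ) * ((r₁ : ℂ) + ((r₂ : ℂ) + (r₃ : ℂ)))))
        + (-(1 / ((Real.pi : ℂ) * I * κ))) ^ 2 *
            (ccoef κ [r₁] * ccoef κ [r₂] * ccoef κ [r₃] /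
              ((r₁ : ℂ) * (r₂ : ℂ) * (r₃ : ℂ) *
                (((r₁ : ℂ) + (r₂ : ℂ)) * ((r₂ : ℂ) + (r₃ : ℂ))))) = 0) := by
  have hA : (Real.pi : ℂ) * I * κ ≠ 0 := by simp [Real.pi_ne_zero, hκ.ne']
  have hg₁₂ : (Nat.gcd r₁ r₂ : ℂ) ≠ 0 := by simp [h₁.ne']
  have hg₂₃ : (Nat.gcd r₂ r₃ : ℂ) ≠ 0 := by simp [h₂.ne']
  have hg : (listGcd [r₁, r₂, r₃] : ℂ) ≠ 0 := by simp [listGcd, h₁.ne']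
  have hr₁ : (r₁ : ℂ) ≠ 0 := by simp [h₁.ne']
  have hr₂ : (r₂ : ℂ) ≠ 0 := by simp [h₂.ne']
  have hr₃ : (r₃ : ℂ) ≠ 0 := by simp [h₃.ne']
  have h₁₂ : (r₁ : ℂ) + r₂ ≠ 0 := by norm_cast; omega
  have h₂₃ : (r₂ : ℂ) + r₃ ≠ 0 := by norm_cast; omega
  have h₁₂₃ : (r₁ : ℂ) + r₂ + r₃ ≠ 0 := by norm_cast; omega
  simp only [ccoef_singleton κ h₁.ne', ccoef_singleton κ h₂.ne', ccoef_singleton κ h₃.ne',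
    ccoef_pair, ccoef_triple, ← add_assoc]
  constructor <;> field_simp <;> ring
end

section
/- Fix positive integers $r_1, \dots, r_n$ and write $r_{i::j} = \gcd(r_i, r_{i+1}, \dots, r_j)$; set $N_{ij} = \frac{r_{(i+1)::(j-1)} \cdot r_{i::j}}{r_{i::(j-1)} \cdot r_{(i+1)::j}}$ for $j - i > 1$. Then each $N_{ij}$ is a positive integer, and $\prod_{i=1}^{n-2}\prod_{j=i+2}^{n} N_{ij} = \frac{r_0 \prod_{j=2}^{n-1} r_j}{\prod_{i=1}^{n-1} r_{i,i+1}}$, where $r_0 = \gcd(r_1, \dots, r_n)$ and $r_{i,i+1} = \gcd(r_i, r_{i+1})$. -/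
/-!
Write `g i j = gcd(rᵢ, …, rⱼ)` and `d = g (i+1) (j-1)`. Peeling off the endpoints gives
`N_{ij} = d · gcd(rᵢ, d, rⱼ) / (gcd(rᵢ, d) · gcd(d, rⱼ))`, an integer because
`gcd(a, d) · gcd(d, b) = gcd(ad, ab, d², db)` divides `d · gcd(a, d, b) = gcd(da, d², db)`.
For the product, `N_{ij} = (g i j / g i (j-1)) / (g (i+1) j / g (i+1) (j-1))`, so the product over
`j` telescopes to `(g i n / g (i+1) n) · (r_{i+1} / gcd(rᵢ, r_{i+1}))`, and the product over `i`
telescopes once more.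
-/

/-- `g r i j = gcd(rᵢ, r_{i+1}, …, rⱼ)`. -/
def rangeGcd (r : ℕ → ℕ) (i j : ℕ) : ℕ := (Finset.Icc i j).gcd r

open Finset

theorem Finset.prod_Ico_div₀ {G : Type*} [CommGroupWithZero G] (f : ℕ → G) {m n : ℕ}
    (hmn : m ≤ n) (hf : ∀ i ∈ Icc m n, f i ≠ 0) :
    ∏ i ∈ Ico m n, f (i + 1) / f i = f n / f m := by
  induction n, hmn using Nat.le_induction with
  | base => simp [div_self (hf m (by simp))]
  | succ n hmn ih =>
    rw [prod_Ico_succ_top hmn, ih fun i hi ↦ hf i (Icc_subset_Icc_right n.le_succ hi),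
      div_mul_div_cancel₀' (hf n (by simp [hmn]))]

theorem Nat.gcd_mul_gcd_dvd_mul_gcd_gcd (a d b : ℕ) :
    Nat.gcd a d * Nat.gcd d b ∣ d * Nat.gcd a (Nat.gcd d b) := by
  rw [← Nat.gcd_mul_left d a, ← Nat.gcd_mul_left d d b, mul_comm d a]
  exact Nat.dvd_gcd (mul_dvd_mul (gcd_dvd_left a d) (gcd_dvd_left d b))
    (Nat.dvd_gcd (mul_dvd_mul (gcd_dvd_right a d) (gcd_dvd_left d b))
      (mul_dvd_mul (gcd_dvd_right a d) (gcd_dvd_right d b)))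

theorem rangeGcd_self (r : ℕ → ℕ) (i : ℕ) : rangeGcd r i i = r i := by
  simp [rangeGcd]

theorem rangeGcd_eq_gcd_left (r : ℕ → ℕ) {i j : ℕ} (h : i ≤ j) :
    rangeGcd r i j = Nat.gcd (r i) (rangeGcd r (i + 1) j) := by
  rw [rangeGcd, rangeGcd, ← Ioc_insert_left h, Icc_add_one_left_eq_Ioc, gcd_insert]
  rfl

theorem rangeGcd_succ_right (r : ℕ → ℕ) {i j : ℕ} (h : i ≤ j + 1) :
    rangeGcd r i (j + 1) = Nat.gcd (rangeGcd r i j) (r (j + 1)) := by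
  rw [rangeGcd, rangeGcd, ← insert_Icc_right_eq_Icc_add_one h, gcd_insert, Nat.gcd_comm]
  rfl

theorem rangeGcd_succ_self (r : ℕ → ℕ) (i : ℕ) :
    rangeGcd r i (i + 1) = Nat.gcd (r i) (r (i + 1)) := by
  rw [rangeGcd_eq_gcd_left r i.le_succ, rangeGcd_self]

theorem rangeGcd_pos {r : ℕ → ℕ} {i j : ℕ} (hi : 0 < r i) (hij : i ≤ j) :
    0 < rangeGcd r i j :=
  Nat.pos_of_ne_zero fun h ↦ hi.ne' (gcd_eq_zero_iff.1 h i (mem_Icc.2 ⟨le_rfl, hij⟩))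

/-- The factor `N_{ij}`. -/
def glueFactor (r : ℕ → ℕ) (i j : ℕ) : ℚ :=
  ((rangeGcd r (i + 1) (j - 1) : ℚ) * (rangeGcd r i j : ℚ)) /
    ((rangeGcd r i (j - 1) : ℚ) * (rangeGcd r (i + 1) j : ℚ))

theorem exists_pos_nat_eq_glueFactor {r : ℕ → ℕ} {i j : ℕ} (hi : 0 < r i) (hi' : 0 < r (i + 1))
    (hij : i + 1 < j) : ∃ m : ℕ, 0 < m ∧ glueFactor r i j = m := by
  obtain ⟨k, rfl⟩ : ∃ k, j = k + 1 := ⟨j - 1, by omega⟩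
  set d := rangeGcd r (i + 1) k
  have hd : 0 < d := rangeGcd_pos hi' (by omega)
  have hright : rangeGcd r (i + 1) (k + 1) = Nat.gcd d (r (k + 1)) :=
    rangeGcd_succ_right r (by omega)
  have hdvd := Nat.gcd_mul_gcd_dvd_mul_gcd_gcd (r i) d (r (k + 1))
  have hden : 0 < Nat.gcd (r i) d * Nat.gcd d (r (k + 1)) :=
    Nat.mul_pos (Nat.gcd_pos_of_pos_left _ hi) (Nat.gcd_pos_of_pos_left _ hd)
  have hnum : 0 < d * Nat.gcd (r i) (Nat.gcd d (r (k + 1))) :=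
    Nat.mul_pos hd (Nat.gcd_pos_of_pos_left _ hi)
  refine ⟨d * Nat.gcd (r i) (Nat.gcd d (r (k + 1))) / (Nat.gcd (r i) d * Nat.gcd d (r (k + 1))),
    Nat.div_pos (Nat.le_of_dvd hnum hdvd) hden, ?_⟩
  rw [glueFactor, Nat.add_sub_cancel, rangeGcd_eq_gcd_left r (by omega : i ≤ k + 1),
    rangeGcd_eq_gcd_left r (by omega : i ≤ k), hright, Nat.cast_div hdvd (by positivity)]
  push_cast
  ring

theorem glueFactor_eq_div_div (r : ℕ → ℕ) (i j : ℕ) :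
    glueFactor r i j = (rangeGcd r i j / rangeGcd r i (j - 1) : ℚ) /
      (rangeGcd r (i + 1) j / rangeGcd r (i + 1) (j - 1)) := by
  rw [div_div_div_eq, glueFactor, mul_comm (rangeGcd r i j : ℚ)]

theorem prod_glueFactor_Icc {r : ℕ → ℕ} {i n : ℕ} (hi : 0 < r i) (hi' : 0 < r (i + 1))
    (hin : i + 1 ≤ n) :
    ∏ j ∈ Icc (i + 2) n, glueFactor r i j =
      (rangeGcd r i n / rangeGcd r (i + 1) n : ℚ) * (r (i + 1) / Nat.gcd (r i) (r (i + 1))) := by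
  have telescope (l : ℕ) (hl : 0 < r l) (hli : l ≤ i + 1) :
      ∏ k ∈ Ico (i + 1) n, (rangeGcd r l (k + 1) / rangeGcd r l k : ℚ) =
        rangeGcd r l n / rangeGcd r l (i + 1) := by
    refine prod_Ico_div₀ (fun k ↦ (rangeGcd r l k : ℚ)) hin fun k hk ↦ ?_
    exact_mod_cast (rangeGcd_pos hl (hli.trans (mem_Icc.1 hk).1)).ne'
  rw [← Ico_add_one_right_eq_Icc, show i + 2 = i + 1 + 1 by rfl, ← prod_Ico_add' _ _ _ 1]
  simp only [glueFactor_eq_div_div, Nat.add_sub_cancel]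
  rw [prod_div_distrib, telescope i hi i.le_succ, telescope (i + 1) hi' le_rfl, rangeGcd_self,
    rangeGcd_succ_self, div_div_div_eq, div_mul_div_comm, mul_comm (Nat.gcd _ _ : ℚ)]

theorem prod_prod_glueFactor {r : ℕ → ℕ} {n : ℕ} (hn : 2 ≤ n) (hr : ∀ k ∈ Icc 1 n, 0 < r k) :
    ∏ i ∈ Icc 1 (n - 2), ∏ j ∈ Icc (i + 2) n, glueFactor r i j =
      (rangeGcd r 1 n * ∏ j ∈ Icc 2 (n - 1), (r j : ℚ)) /
        ∏ i ∈ Icc 1 (n - 1), (Nat.gcd (r i) (r (i + 1)) : ℚ) := by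
  obtain ⟨m, rfl⟩ : ∃ m, n = m + 2 := ⟨n - 2, by omega⟩
  have telescope : ∏ i ∈ Icc 1 m, (rangeGcd r i (m + 2) / rangeGcd r (i + 1) (m + 2) : ℚ) =
      rangeGcd r 1 (m + 2) / rangeGcd r (m + 1) (m + 2) := by
    have hf : ∀ k ∈ Icc 1 (m + 1), (rangeGcd r k (m + 2) : ℚ) ≠ 0 := fun k hk ↦ by
      simp only [mem_Icc] at hk
      exact_mod_cast (rangeGcd_pos (hr k (mem_Icc.2 ⟨hk.1, by omega⟩)) (by omega)).ne'
    rw [← inv_div (rangeGcd r (m + 1) (m + 2) : ℚ),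
      ← prod_Ico_div₀ (fun k ↦ (rangeGcd r k (m + 2) : ℚ)) (by omega) hf, ← prod_inv_distrib,
      Ico_add_one_right_eq_Icc]
    simp only [inv_div]
  have shift : ∏ i ∈ Icc 1 m, (r (i + 1) : ℚ) = ∏ j ∈ Icc 2 (m + 1), (r j : ℚ) := by
    rw [show 2 = 1 + 1 by rfl, ← map_add_right_Icc, prod_map]
    rfl
  have last : ∏ i ∈ Icc 1 (m + 1), (Nat.gcd (r i) (r (i + 1)) : ℚ) =
      (∏ i ∈ Icc 1 m, (Nat.gcd (r i) (r (i + 1)) : ℚ)) * rangeGcd r (m + 1) (m + 2) := by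
    rw [prod_Icc_succ_top (by omega), rangeGcd_succ_self]
  simp only [Nat.add_sub_cancel, show m + 2 - 1 = m + 1 by rfl]
  rw [prod_congr rfl fun i hi ↦ prod_glueFactor_Icc (hr i (by simp at hi ⊢; omega))
    (hr (i + 1) (by simp at hi ⊢; omega)) (by simp at hi; omega), prod_mul_distrib, telescope,
    prod_div_distrib, shift, last]
  ring

/-- Writing `g i j = gcd(rᵢ, …, rⱼ)` and `N_{ij} = (g (i+1) (j-1) · g i j)/(g i (j-1) · g (i+1) j)`
for `j - i > 1`: each `N_{ij}` is a positive integer, and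
`∏_{i=1}^{n-2} ∏_{j=i+2}^{n} N_{ij} = r₀ (∏_{j=2}^{n-1} rⱼ) / (∏_{i=1}^{n-1} gcd(rᵢ, r_{i+1}))`
where `r₀ = gcd(r₁, …, rₙ)`. -/
theorem glue_vector_count (n : ℕ) (hn : 2 ≤ n) (r : ℕ → ℕ)
    (hr : ∀ i, 1 ≤ i → i ≤ n → 0 < r i) :
    (∀ i j : ℕ, 1 ≤ i → i + 1 < j → j ≤ n →
      ∃ m : ℕ, 0 < m ∧
        ((rangeGcd r (i + 1) (j - 1) : ℚ) * (rangeGcd r i j : ℚ)) /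
            ((rangeGcd r i (j - 1) : ℚ) * (rangeGcd r (i + 1) j : ℚ)) = (m : ℚ)) ∧
    ∏ i ∈ Finset.Icc 1 (n - 2), ∏ j ∈ Finset.Icc (i + 2) n,
        ((rangeGcd r (i + 1) (j - 1) : ℚ) * (rangeGcd r i j : ℚ)) /
          ((rangeGcd r i (j - 1) : ℚ) * (rangeGcd r (i + 1) j : ℚ))
      = ((rangeGcd r 1 n : ℚ) * ∏ j ∈ Finset.Icc 2 (n - 1), (r j : ℚ)) /
          ∏ i ∈ Finset.Icc 1 (n - 1), (Nat.gcd (r i) (r (i + 1)) : ℚ) :=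
  ⟨fun i j hi hij hj ↦
      exists_pos_nat_eq_glueFactor (hr i hi (by omega)) (hr (i + 1) (by omega) (by omega)) hij,
    prod_prod_glueFactor hn fun k hk ↦ hr k (mem_Icc.1 hk).1 (mem_Icc.1 hk).2⟩
end
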